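/- With notation as above (q ≥ 1, ω ∈ [θ,1]^N, θ ∈ (0,1)), define the cone T_{ρ,s}^q = {x ∈ ℂ^N : ∃ S ⊂ [N], |S| = s, ‖x_S‖_q ≥ (ρ/s^{1−1/q})‖x_{S^c}‖_{ω,1}}. Then T_{ρ,s}^q ∩ B_{ℓ_q^N} ⊆ (2 + 1/(ρθ)) · D_s^q, where B_{ℓ_q^N} is the unit ℓ_q ball and D_s^q is the convex hull of unit-norm s-sparse vectors. -/

import Mathlib

open scoped Pointwise

noncomputable section

/-- The ℓ_q norm of a complex vector. -/
def cnorm (q : ℝ) {n : ℕ} (x : Fin n → ℂ) : ℝ :=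
  (∑ i, ‖x i‖ ^ q) ^ (1 / q)

/-- The weighted ℓ_1 norm ‖x‖_{ω,1} = ∑ i, ω i * |x i|. -/
def wnorm {n : ℕ} (ω : Fin n → ℝ) (x : Fin n → ℂ) : ℝ :=
  ∑ i, ω i * ‖x i‖

/-- Restriction of x to an index set S (zero outside S). -/
def restrict {n : ℕ} (S : Finset (Fin n)) (x : Fin n → ℂ) : Fin n → ℂ :=
  fun i => if i ∈ S then x i else 0

/-- x is s-sparse. -/
def CSparse {n : ℕ} (s : ℕ) (x : Fin n → ℂ) : Prop :=
  (Finset.univ.filter fun i => x i ≠ 0).card ≤ s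

/-- Σ_s^q : the set of s-sparse vectors of unit ℓ_q norm. -/
def SigmaSq (s : ℕ) (q : ℝ) (n : ℕ) : Set (Fin n → ℂ) :=
  {x | CSparse s x ∧ cnorm q x = 1}

/-- The cone T_{ρ,s}^q. -/
def Tcone (ρ : ℝ) (s : ℕ) (q : ℝ) {n : ℕ} (ω : Fin n → ℝ) : Set (Fin n → ℂ) :=
  {x | ∃ S : Finset (Fin n), S.card = s ∧
    ρ / (s : ℝ) ^ (1 - 1 / q) * wnorm ω (restrict Sᶜ x) ≤ cnorm q (restrict S x)}

/-!
Split `x = x_S + x_{Sᶜ}`. The head `x_S` is `s`-sparse with `‖x_S‖_q ≤ 1`, so it lies in `D_s^q`,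
and the cone condition together with `ω ≥ θ` bounds the tail by
`‖x_{Sᶜ}‖_1 ≤ s^{1-1/q} / (ρθ)`. Any `y` all of whose `s`-sparse restrictions have `ℓ_q` norm
at most `c` lies in `(c + s^{1/q-1} ‖y‖_1) • D_s^q`: cut off the `s` largest entries of `y`; the
remaining entries are bounded by their average, so every `s`-sparse piece of the rest has
`ℓ_q` norm at most `s^{1/q-1}` times the `ℓ_1` norm of the block just removed, and we recurse.
-/

theorem StarConvex.smul_set_mono {𝕜 E : Type*} [Field 𝕜] [LinearOrder 𝕜] [IsStrictOrderedRing 𝕜]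
    [AddCommGroup E] [Module 𝕜 E] {s : Set E} (hs : StarConvex 𝕜 0 s) {a b : 𝕜}
    (ha : 0 ≤ a) (hab : a ≤ b) : a • s ⊆ b • s := by
  rcases hab.eq_or_lt with rfl | hlt
  · rfl
  have hb : 0 < b := ha.trans_lt hlt
  rintro _ ⟨y, hy, rfl⟩
  refine ⟨(a / b) • y, hs.smul_mem hy (div_nonneg ha hb.le) (div_le_one_of_le₀ hab hb.le), ?_⟩
  simp only [smul_smul, mul_div_cancel₀ a hb.ne']

theorem Finset.exists_subset_card_eq_forall_le {α : Type*} [DecidableEq α] (A : Finset α)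
    (f : α → ℝ) {s : ℕ} (hs : s ≤ A.card) :
    ∃ T ⊆ A, T.card = s ∧ ∀ i ∈ A \ T, ∀ j ∈ T, f i ≤ f j := by
  obtain ⟨T, hT, hmax⟩ := Finset.exists_max_image (A.powersetCard s)
    (fun T => ∑ i ∈ T, f i) (Finset.powersetCard_nonempty.2 hs)
  rw [Finset.mem_powersetCard] at hT
  refine ⟨T, hT.1, hT.2, fun i hi j hj => ?_⟩
  rw [Finset.mem_sdiff] at hi
  -- swapping `j` out for `i` gives another `s`-subset of `A`, whose sum is no larger
  have hiT : i ∉ T.erase j := fun h => hi.2 (Finset.mem_of_mem_erase h)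
  have hswap : insert i (T.erase j) ∈ A.powersetCard s := by
    rw [Finset.mem_powersetCard, Finset.card_insert_of_notMem hiT,
      Finset.card_erase_of_mem hj, hT.2, Nat.sub_add_cancel (hT.2 ▸ Finset.card_pos.2 ⟨j, hj⟩)]
    exact ⟨Finset.insert_subset hi.1 ((Finset.erase_subset j T).trans hT.1), rfl⟩
  have := hmax _ hswap
  rw [Finset.sum_insert hiT, ← Finset.add_sum_erase T f hj] at this
  linarith

section SparseVectors

variable {N s : ℕ} {q : ℝ}

def csupport (y : Fin N → ℂ) : Finset (Fin N) :=
  Finset.univ.filter fun i => y i ≠ 0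

@[simp]
theorem mem_csupport {y : Fin N → ℂ} {i : Fin N} : i ∈ csupport y ↔ y i ≠ 0 := by
  simp [csupport]

theorem cSparse_iff_card_csupport_le {y : Fin N → ℂ} : CSparse s y ↔ (csupport y).card ≤ s :=
  Iff.rfl

theorem cnorm_nonneg (q : ℝ) (x : Fin N → ℂ) : 0 ≤ cnorm q x := by
  unfold cnorm; positivity

theorem cnorm_pos {x : Fin N → ℂ} (hx : x ≠ 0) : 0 < cnorm q x := by
  obtain ⟨i, hi⟩ := Function.ne_iff.1 hx
  have hsum : 0 < ∑ j, ‖x j‖ ^ q :=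
    Finset.sum_pos' (fun j _ => by positivity)
      ⟨i, Finset.mem_univ i, Real.rpow_pos_of_pos (norm_pos_iff.2 hi) q⟩
  exact Real.rpow_pos_of_pos hsum _

theorem cnorm_smul (hq : q ≠ 0) (c : ℝ) (x : Fin N → ℂ) :
    cnorm q (c • x) = |c| * cnorm q x := by
  have hterm : ∀ i, ‖(c • x) i‖ ^ q = |c| ^ q * ‖x i‖ ^ q := fun i => by
    rw [Pi.smul_apply, norm_smul, Real.norm_eq_abs, Real.mul_rpow (abs_nonneg c) (norm_nonneg _)]
  unfold cnorm
  simp_rw [hterm]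
  rw [← Finset.mul_sum, Real.mul_rpow (by positivity) (by positivity),
    ← Real.rpow_mul (abs_nonneg c), mul_one_div_cancel hq, Real.rpow_one]

theorem cnorm_neg (x : Fin N → ℂ) : cnorm q (-x) = cnorm q x := by
  simp only [cnorm, Pi.neg_apply, norm_neg]

theorem cnorm_mono (hq : 0 < q) {x y : Fin N → ℂ} (h : ∀ i, ‖x i‖ ≤ ‖y i‖) :
    cnorm q x ≤ cnorm q y := by
  unfold cnorm
  gcongr with i
  exact h i

theorem norm_restrict_le (T : Finset (Fin N)) (x : Fin N → ℂ) (i : Fin N) :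
    ‖restrict T x i‖ ≤ ‖x i‖ := by
  unfold restrict; split_ifs <;> simp

theorem cnorm_restrict_le (hq : 0 < q) (T : Finset (Fin N)) (x : Fin N → ℂ) :
    cnorm q (restrict T x) ≤ cnorm q x :=
  cnorm_mono hq (norm_restrict_le T x)

theorem cnorm_restrict (hq : q ≠ 0) (T : Finset (Fin N)) (x : Fin N → ℂ) :
    cnorm q (restrict T x) = (∑ i ∈ T, ‖x i‖ ^ q) ^ (1 / q) := by
  have hterm : ∀ i, ‖restrict T x i‖ ^ q = if i ∈ T then ‖x i‖ ^ q else 0 := fun i => by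
    unfold restrict; split_ifs <;> simp [Real.zero_rpow hq]
  unfold cnorm
  simp_rw [hterm]
  rw [Finset.sum_ite_mem, Finset.univ_inter]

theorem cnorm_restrict_le_of_norm_le (hq : 0 < q) {T : Finset (Fin N)} (hT : T.card ≤ s)
    {x : Fin N → ℂ} {b : ℝ} (hb0 : 0 ≤ b) (hb : ∀ i, ‖x i‖ ≤ b) :
    cnorm q (restrict T x) ≤ (s : ℝ) ^ (1 / q) * b := by
  calc cnorm q (restrict T x) ≤ (∑ _i ∈ T, b ^ q) ^ (1 / q) := by
        rw [cnorm_restrict hq.ne']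
        gcongr with i
        exact hb i
    _ ≤ ((s : ℝ) * b ^ q) ^ (1 / q) := by
        rw [Finset.sum_const, nsmul_eq_mul]
        gcongr
    _ = (s : ℝ) ^ (1 / q) * b := by
        rw [Real.mul_rpow (Nat.cast_nonneg s) (by positivity), ← Real.rpow_mul hb0,
          mul_one_div_cancel hq.ne', Real.rpow_one]

theorem restrict_add_restrict_compl (T : Finset (Fin N)) (x : Fin N → ℂ) :
    restrict T x + restrict Tᶜ x = x := by
  funext i
  by_cases hi : i ∈ T <;> simp [restrict, hi]

theorem sum_norm_restrict (T : Finset (Fin N)) (x : Fin N → ℂ) :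
    ∑ i, ‖restrict T x i‖ = ∑ i ∈ T, ‖x i‖ := by
  simp only [restrict, apply_ite, norm_zero]
  rw [Finset.sum_ite_mem, Finset.univ_inter]

theorem restrict_csupport (x : Fin N → ℂ) : restrict (csupport x) x = x := by
  funext i
  by_cases hi : x i = 0 <;> simp [restrict, hi]

theorem csupport_restrict (T : Finset (Fin N)) (x : Fin N → ℂ) :
    csupport (restrict T x) = csupport x ∩ T := by
  ext i
  by_cases hi : i ∈ T <;> simp [restrict, hi]

theorem cSparse_restrict {T : Finset (Fin N)} (hT : T.card ≤ s) (x : Fin N → ℂ) :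
    CSparse s (restrict T x) := by
  rw [cSparse_iff_card_csupport_le, csupport_restrict]
  exact (Finset.card_le_card Finset.inter_subset_right).trans hT

theorem neg_mem_sigmaSq {x : Fin N → ℂ} (hx : x ∈ SigmaSq s q N) : -x ∈ SigmaSq s q N := by
  refine ⟨?_, (cnorm_neg x).trans hx.2⟩
  have hsupp : csupport (-x) = csupport x := by ext i; simp
  rw [cSparse_iff_card_csupport_le, hsupp]
  exact hx.1

theorem inv_cnorm_smul_mem_sigmaSq (hq : q ≠ 0) {z : Fin N → ℂ} (hz : CSparse s z)
    (hz0 : z ≠ 0) : (cnorm q z)⁻¹ • z ∈ SigmaSq s q N := by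
  have ht := cnorm_pos (q := q) hz0
  refine ⟨?_, ?_⟩
  · have hsupp : csupport ((cnorm q z)⁻¹ • z) = csupport z := by
      ext i; simp [ht.ne']
    rw [cSparse_iff_card_csupport_le, hsupp]
    exact hz
  · rw [cnorm_smul hq, abs_of_pos (inv_pos.2 ht), inv_mul_cancel₀ ht.ne']

theorem zero_mem_convexHull_sigmaSq (hq : q ≠ 0) (hs : 1 ≤ s) (hN : 0 < N) :
    (0 : Fin N → ℂ) ∈ convexHull ℝ (SigmaSq s q N) := by
  set e : Fin N → ℂ := Pi.single ⟨0, hN⟩ 1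
  have he0 : e ≠ 0 := by simp [e]
  have he : CSparse s e := by
    rw [cSparse_iff_card_csupport_le]
    refine le_trans (Finset.card_le_one.2 fun i hi j hj => ?_) hs
    simp only [mem_csupport, e, Pi.single_apply] at hi hj
    grind
  have hu := inv_cnorm_smul_mem_sigmaSq hq he he0
  have hmid := (convex_convexHull ℝ _) (subset_convexHull ℝ _ hu)
    (subset_convexHull ℝ _ (neg_mem_sigmaSq hu)) (by norm_num : (0 : ℝ) ≤ 1 / 2)
    (by norm_num : (0 : ℝ) ≤ 1 / 2) (by norm_num)
  rwa [smul_neg, add_neg_cancel] at hmid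

theorem mem_smul_convexHull_sigmaSq_of_cSparse (hq : q ≠ 0) (hs : 1 ≤ s) (hN : 0 < N)
    {z : Fin N → ℂ} (hz : CSparse s z) {c : ℝ} (hc : cnorm q z ≤ c) :
    z ∈ c • convexHull ℝ (SigmaSq s q N) := by
  have h0 := zero_mem_convexHull_sigmaSq hq hs hN
  refine ((convex_convexHull ℝ _).starConvex h0).smul_set_mono (cnorm_nonneg q z) hc ?_
  by_cases hz0 : z = 0
  · simpa [hz0] using Set.smul_mem_smul_set (a := cnorm q z) h0
  · refine ⟨_, subset_convexHull ℝ _ (inv_cnorm_smul_mem_sigmaSq hq hz hz0), ?_⟩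
    simp only [smul_smul, mul_inv_cancel₀ (cnorm_pos (q := q) hz0).ne', one_smul]

theorem card_mul_norm_restrict_compl_le {y : Fin N → ℂ} {T : Finset (Fin N)}
    (htop : ∀ i ∈ csupport y \ T, ∀ j ∈ T, ‖y i‖ ≤ ‖y j‖) (i : Fin N) :
    (T.card : ℝ) * ‖restrict Tᶜ y i‖ ≤ ∑ j ∈ T, ‖y j‖ := by
  by_cases hi : i ∈ csupport y \ T
  · have hiT : i ∈ Tᶜ := Finset.mem_compl.2 (Finset.mem_sdiff.1 hi).2
    simpa [restrict, hiT] using Finset.card_nsmul_le_sum T _ _ (htop i hi)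
  · have : restrict Tᶜ y i = 0 := by
      by_cases hiT : i ∈ T <;> simp_all [restrict]
    rw [this, norm_zero, mul_zero]
    positivity

theorem mem_smul_convexHull_sigmaSq (hq : 0 < q) (hs : 1 ≤ s) (hN : 0 < N) {y : Fin N → ℂ}
    {c : ℝ} (hy : ∀ T : Finset (Fin N), T.card ≤ s → cnorm q (restrict T y) ≤ c) :
    y ∈ (c + (s : ℝ) ^ (1 / q - 1) * ∑ i, ‖y i‖) • convexHull ℝ (SigmaSq s q N) := by
  induction hm : (csupport y).card using Nat.strong_induction_on generalizing y c with
  | _ m ih =>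
  set D := convexHull ℝ (SigmaSq s q N)
  have hc : 0 ≤ c := (cnorm_nonneg q _).trans (hy ∅ (Nat.zero_le s))
  have hs' : (0 : ℝ) < s := by exact_mod_cast hs
  have hyT : ∀ T : Finset (Fin N), T.card ≤ s → restrict T y ∈ c • D := fun T hT =>
    mem_smul_convexHull_sigmaSq_of_cSparse hq.ne' hs hN (cSparse_restrict hT y) (hy T hT)
  by_cases hsparse : m ≤ s
  · have hD : StarConvex ℝ 0 D :=
      (convex_convexHull ℝ _).starConvex (zero_mem_convexHull_sigmaSq hq.ne' hs hN)
    refine hD.smul_set_mono hc (le_add_of_nonneg_right (by positivity)) ?_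
    have := hyT _ (hm ▸ hsparse)
    rwa [restrict_csupport] at this
  -- split off the `s` largest entries; the rest is bounded entrywise by their average
  obtain ⟨T, hTy, hTs, htop⟩ :=
    (csupport y).exists_subset_card_eq_forall_le (‖y ·‖) (by omega : s ≤ (csupport y).card)
  set z := restrict Tᶜ y
  set b := (∑ j ∈ T, ‖y j‖) / s
  have hb : ∀ i, ‖z i‖ ≤ b := fun i => by
    rw [le_div_iff₀ hs', mul_comm, ← hTs]
    exact card_mul_norm_restrict_compl_le htop i
  have hzm : (csupport z).card < m := by
    rw [csupport_restrict, ← Finset.sdiff_eq_inter_compl, Finset.card_sdiff_of_subset hTy]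
    omega
  have hz := ih _ hzm
    (fun R hR => cnorm_restrict_le_of_norm_le hq hR (by positivity) hb) rfl
  have hcoeff : (s : ℝ) ^ (1 / q) * b + (s : ℝ) ^ (1 / q - 1) * ∑ i, ‖z i‖
      = (s : ℝ) ^ (1 / q - 1) * ∑ i, ‖y i‖ := by
    rw [sum_norm_restrict, ← Finset.sum_add_sum_compl T (‖y ·‖), Real.rpow_sub hs',
      Real.rpow_one]
    ring
  have hsum := Set.add_mem_add (hyT T hTs.le) hz
  rwa [restrict_add_restrict_compl, ← (convex_convexHull ℝ _).add_smul hc (by positivity),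
    hcoeff] at hsum

theorem mul_sum_norm_le_wnorm {θ : ℝ} {ω : Fin N → ℝ} (hω : ∀ i, θ ≤ ω i)
    (y : Fin N → ℂ) : θ * ∑ i, ‖y i‖ ≤ wnorm ω y := by
  rw [Finset.mul_sum]
  exact Finset.sum_le_sum fun i _ => mul_le_mul_of_nonneg_right (hω i) (norm_nonneg _)

end SparseVectors

/-- T_{ρ,s}^q ∩ B_{ℓ_q} ⊆ (2 + 1/(ρθ)) · D_s^q. -/
theorem Tcone_inter_ball_subset {N : ℕ} (θ ρ : ℝ) (hθ : θ ∈ Set.Ioo (0:ℝ) 1)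
    (hρ : ρ ∈ Set.Ioo (0:ℝ) 1) (q : ℝ) (hq : 1 ≤ q) (s : ℕ) (hs : 1 ≤ s)
    (ω : Fin N → ℝ) (hω : ∀ i, ω i ∈ Set.Icc θ 1) :
    Tcone ρ s q ω ∩ {x | cnorm q x ≤ 1} ⊆
      (2 + 1 / (ρ * θ)) • convexHull ℝ (SigmaSq s q N) := by
  rintro x ⟨⟨S, hS, hcone⟩, hx⟩
  obtain ⟨hθ0, -⟩ := hθ
  obtain ⟨hρ0, -⟩ := hρ
  have hq0 : 0 < q := by linarith
  have hs' : (0 : ℝ) < s := by exact_mod_cast hs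
  have hN : 0 < N :=
    (hs.trans_eq hS.symm).trans (S.card_le_univ.trans_eq (Fintype.card_fin N))
  set y := restrict Sᶜ x
  have hhead := mem_smul_convexHull_sigmaSq_of_cSparse hq0.ne' hs hN (cSparse_restrict hS.le x)
    ((cnorm_restrict_le hq0 S x).trans hx)
  have htail := mem_smul_convexHull_sigmaSq hq0 hs hN (y := y)
    fun T _ => ((cnorm_restrict_le hq0 T y).trans (cnorm_restrict_le hq0 Sᶜ x)).trans hx
  have hy : (s : ℝ) ^ (1 / q - 1) * ∑ i, ‖y i‖ ≤ 1 / (ρ * θ) := by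
    rw [le_div_iff₀ (mul_pos hρ0 hθ0), show 1 / q - 1 = -(1 - 1 / q) by ring,
      Real.rpow_neg hs'.le]
    calc _ = ρ / (s : ℝ) ^ (1 - 1 / q) * (θ * ∑ i, ‖y i‖) := by ring
      _ ≤ ρ / (s : ℝ) ^ (1 - 1 / q) * wnorm ω y := by
        gcongr
        exact mul_sum_norm_le_wnorm (fun i => (hω i).1) y
      _ ≤ 1 := hcone.trans ((cnorm_restrict_le hq0 S x).trans hx)
  have hsum := Set.add_mem_add hhead htail
  rw [restrict_add_restrict_compl, ← (convex_convexHull ℝ _).add_smul zero_le_one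
    (by positivity)] at hsum
  refine ((convex_convexHull ℝ _).starConvex
    (zero_mem_convexHull_sigmaSq hq0.ne' hs hN)).smul_set_mono (by positivity) ?_ hsum
  linarith
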